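/- Assume: T > 0; r1, r2, a1, a2, b1, b2 : ℝ → ℝ are continuous, positive, T-periodic, and the bistability condition (A2) holds: ∫_0^T (a1(t)p(t) − b1(t)q(t)) dt < 0 and ∫_0^T (b2(t)q(t) − a2(t)p(t)) dt < 0. Then there exist a constant λ1 > 0 and continuously differentiable, positive, T-periodic functions p1⁺, p2⁺ : ℝ → ℝ such that for all t: (p1⁺)'(t) ≥ [λ1 − a1(t)p(t)] p1⁺(t) + b1(t)q(t) p2⁺(t) and (p2⁺)'(t) ≥ [λ1 + b2(t)q(t) − a2(t)p(t)] p2⁺(t). -/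

import Mathlib

open MeasureTheory Set Filter

noncomputable def p0c (r a : ℝ → ℝ) (T : ℝ) : ℝ :=
  (Real.exp (∫ s in (0:ℝ)..T, r s) - 1) /
    ∫ s in (0:ℝ)..T, Real.exp (∫ τ in (0:ℝ)..s, r τ) * a s

noncomputable def pfun (r a : ℝ → ℝ) (T t : ℝ) : ℝ :=
  p0c r a T * Real.exp (∫ s in (0:ℝ)..t, r s) /
    (1 + p0c r a T * ∫ s in (0:ℝ)..t, Real.exp (∫ τ in (0:ℝ)..s, r τ) * a s)

/-!
Over one period, both the numerator and the denominator of the logistic solution `p` get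
multiplied by `exp (∫₀ᵀ r)`, so `p` is periodic, and the denominator is positive because its
sign is periodic and it is at least `1` on `[0, T)`.

With `φ = a₂ p - b₂ q` and `μ` its mean, which is positive by (A2), the function
`exp ∫₀ᵗ (μ - φ)` is a positive periodic solution of `p₂' = (μ - φ) p₂`. Since `a₁ p` has a
positive minimum `m` and the forcing `b₁ q p₂` is bounded, a large constant `p₁` works as soon
as `λ₁ < m`; hence `λ₁ = min μ (m / 2)`.
-/

open Function Real intervalIntegral

lemma integral_add_period_of_map_add_eq_mul {g : ℝ → ℝ} {T c : ℝ} (hg : Continuous g)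
    (hgc : ∀ s, g (s + T) = c * g s) (t : ℝ) :
    ∫ s in (0:ℝ)..t + T, g s = (∫ s in (0:ℝ)..T, g s) + c * ∫ s in (0:ℝ)..t, g s := by
  have hshift : ∫ s in T..t + T, g s = ∫ s in (0:ℝ)..t, g (s + T) := by
    simp [integral_comp_add_right]
  rw [← integral_add_adjacent_intervals (hg.intervalIntegrable 0 T)
    (hg.intervalIntegrable T (t + T)), hshift]
  simp only [hgc, intervalIntegral.integral_const_mul]

lemma integral_add_period_of_periodic {f : ℝ → ℝ} {T : ℝ} (hf : Continuous f)
    (hper : Periodic f T) (t : ℝ) :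
    ∫ s in (0:ℝ)..t + T, f s = (∫ s in (0:ℝ)..T, f s) + ∫ s in (0:ℝ)..t, f s := by
  simpa using integral_add_period_of_map_add_eq_mul hf (c := 1) (by simpa using hper) t

lemma pos_of_map_add_eq_mul {f : ℝ → ℝ} {T c : ℝ} (hT : 0 < T) (hc : 0 < c)
    (hf : ∀ t, f (t + T) = c * f t) (h0 : ∀ t ∈ Ico 0 T, 0 < f t) (t : ℝ) : 0 < f t := by
  have hsign : Periodic (fun t => 0 < f t) T := fun t => by
    simp only [hf, mul_pos_iff_of_pos_left hc]
  obtain ⟨y, hy, hty⟩ := hsign.exists_mem_Ico₀ hT t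
  exact hty.mpr (h0 y hy)

def IsPosPeriodic (f : ℝ → ℝ) (T : ℝ) : Prop :=
  Continuous f ∧ (∀ t, 0 < f t) ∧ Periodic f T

lemma IsPosPeriodic.mul {f g : ℝ → ℝ} {T : ℝ} (hf : IsPosPeriodic f T)
    (hg : IsPosPeriodic g T) : IsPosPeriodic (f * g) T :=
  ⟨hf.1.mul hg.1, fun t => mul_pos (hf.2.1 t) (hg.2.1 t), hf.2.2.mul hg.2.2⟩

lemma IsPosPeriodic.exists_pos_le {f : ℝ → ℝ} {T : ℝ} (hf : IsPosPeriodic f T) (hT : T ≠ 0) :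
    ∃ m > 0, ∀ t, m ≤ f t := by
  obtain ⟨hcont, hpos, hper⟩ := hf
  obtain ⟨m, ⟨t₀, rfl⟩, hm⟩ := (hper.compact_of_continuous hT hcont).exists_isLeast
    (range_nonempty f)
  exact ⟨f t₀, hpos t₀, fun t => hm (mem_range_self t)⟩

section Logistic

variable {r a : ℝ → ℝ} {T : ℝ}

lemma continuous_exp_primitive_mul (hr : Continuous r) (ha : Continuous a) :
    Continuous fun s => exp (∫ τ in (0:ℝ)..s, r τ) * a s :=
  (continuous_exp.comp (continuous_primitive (fun _ _ => hr.intervalIntegrable _ _) 0)).mul ha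

lemma integral_exp_primitive_mul_pos (hT : 0 < T) (hr : Continuous r) (ha : Continuous a)
    (ha_pos : ∀ t, 0 < a t) : 0 < ∫ s in (0:ℝ)..T, exp (∫ τ in (0:ℝ)..s, r τ) * a s :=
  intervalIntegral_pos_of_pos_on ((continuous_exp_primitive_mul hr ha).intervalIntegrable _ _)
    (fun s _ => mul_pos (exp_pos _) (ha_pos s)) hT

lemma p0c_pos (hT : 0 < T) (hr : IsPosPeriodic r T) (ha : IsPosPeriodic a T) :
    0 < p0c r a T :=
  div_pos (sub_pos.mpr (one_lt_exp_iff.mpr (intervalIntegral_pos_of_pos_on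
    (hr.1.intervalIntegrable _ _) (fun s _ => hr.2.1 s) hT)))
    (integral_exp_primitive_mul_pos hT hr.1 ha.1 ha.2.1)

lemma p0c_mul_integral (hT : 0 < T) (hr : IsPosPeriodic r T) (ha : IsPosPeriodic a T) :
    p0c r a T * ∫ s in (0:ℝ)..T, exp (∫ τ in (0:ℝ)..s, r τ) * a s
      = exp (∫ s in (0:ℝ)..T, r s) - 1 :=
  div_mul_cancel₀ _ (integral_exp_primitive_mul_pos hT hr.1 ha.1 ha.2.1).ne'

noncomputable def pfunDenom (r a : ℝ → ℝ) (T t : ℝ) : ℝ :=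
  1 + p0c r a T * ∫ s in (0:ℝ)..t, exp (∫ τ in (0:ℝ)..s, r τ) * a s

lemma pfun_eq_div_pfunDenom (t : ℝ) :
    pfun r a T t = p0c r a T * exp (∫ s in (0:ℝ)..t, r s) / pfunDenom r a T t := rfl

lemma pfunDenom_add_period (hT : 0 < T) (hr : IsPosPeriodic r T) (ha : IsPosPeriodic a T)
    (t : ℝ) : pfunDenom r a T (t + T) = exp (∫ s in (0:ℝ)..T, r s) * pfunDenom r a T t := by
  have hR := integral_add_period_of_periodic hr.1 hr.2.2
  rw [pfunDenom, integral_add_period_of_map_add_eq_mul (continuous_exp_primitive_mul hr.1 ha.1)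
    (c := exp (∫ s in (0:ℝ)..T, r s)) (fun s => by rw [hR, exp_add, ha.2.2]; ring) t, pfunDenom]
  linear_combination p0c_mul_integral hT hr ha

lemma pfunDenom_pos (hT : 0 < T) (hr : IsPosPeriodic r T) (ha : IsPosPeriodic a T) (t : ℝ) :
    0 < pfunDenom r a T t := by
  refine pos_of_map_add_eq_mul hT (exp_pos _) (pfunDenom_add_period hT hr ha) (fun t ht => ?_) t
  have hA : 0 ≤ ∫ s in (0:ℝ)..t, exp (∫ τ in (0:ℝ)..s, r τ) * a s :=
    integral_nonneg ht.1 fun s _ => (mul_pos (exp_pos _) (ha.2.1 s)).le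
  have := p0c_pos hT hr ha
  unfold pfunDenom
  positivity

lemma IsPosPeriodic.pfun (hT : 0 < T) (hr : IsPosPeriodic r T) (ha : IsPosPeriodic a T) :
    IsPosPeriodic (pfun r a T) T := by
  have hR : Continuous fun t => ∫ s in (0:ℝ)..t, r s :=
    continuous_primitive (fun _ _ => hr.1.intervalIntegrable _ _) 0
  have hD : Continuous (pfunDenom r a T) := continuous_const.add (continuous_const.mul
    (continuous_primitive
      (fun _ _ => (continuous_exp_primitive_mul hr.1 ha.1).intervalIntegrable _ _) 0))
  have hD_pos := pfunDenom_pos hT hr ha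
  refine ⟨?_, fun t => ?_, fun t => ?_⟩
  · exact (continuous_const.mul (continuous_exp.comp hR)).div hD fun t => (hD_pos t).ne'
  · exact div_pos (mul_pos (p0c_pos hT hr ha) (exp_pos _)) (hD_pos t)
  · rw [pfun_eq_div_pfunDenom, pfun_eq_div_pfunDenom, pfunDenom_add_period hT hr ha,
      integral_add_period_of_periodic hr.1 hr.2.2, exp_add]
    field_simp [(hD_pos t).ne']

end Logistic

lemma periodic_exp_primitive {f : ℝ → ℝ} {T : ℝ} (hf : Continuous f) (hper : Periodic f T)
    (h0 : ∫ s in (0:ℝ)..T, f s = 0) : Periodic (fun t => exp (∫ s in (0:ℝ)..t, f s)) T := by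
  intro t
  simp only [integral_add_period_of_periodic hf hper, h0, zero_add]

lemma exists_pos_periodic_solution_mean_sub {φ : ℝ → ℝ} {T : ℝ} (hT : 0 < T)
    (hφ : Continuous φ) (hper : Periodic φ T) :
    ∃ P P' : ℝ → ℝ, Continuous P' ∧ (∀ t, HasDerivAt P (P' t) t) ∧ (∀ t, 0 < P t) ∧
      Periodic P T ∧ ∀ t, P' t = ((∫ s in (0:ℝ)..T, φ s) / T - φ t) * P t := by
  set f := fun s => (∫ s in (0:ℝ)..T, φ s) / T - φ s
  have hf : Continuous f := continuous_const.sub hφ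
  have hf0 : ∫ s in (0:ℝ)..T, f s = 0 := by
    rw [intervalIntegral.integral_sub intervalIntegrable_const (hφ.intervalIntegrable _ _),
      intervalIntegral.integral_const, smul_eq_mul, sub_zero]
    field_simp
    ring
  refine ⟨fun t => exp (∫ s in (0:ℝ)..t, f s), fun t => f t * exp (∫ s in (0:ℝ)..t, f s),
    hf.mul (continuous_exp.comp (continuous_primitive (fun _ _ => hf.intervalIntegrable _ _) 0)),
    fun t => ?_, fun t => exp_pos _,
    periodic_exp_primitive hf (fun t => by simp only [f, hper t]) hf0, fun t => rfl⟩
  simpa only [mul_comm] using (hf.integral_hasStrictDerivAt 0 t).hasDerivAt.exp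

lemma exists_pos_const_mul_add_nonpos {ψ h : ℝ → ℝ} {m M lam : ℝ} (hψ : ∀ t, m ≤ ψ t)
    (hh : ∀ t, h t ≤ M) (hlam : lam < m) : ∃ C > 0, ∀ t, (lam - ψ t) * C + h t ≤ 0 := by
  refine ⟨max (M / (m - lam)) 1, by positivity, fun t => ?_⟩
  have hC : M ≤ (m - lam) * max (M / (m - lam)) 1 := by
    rw [← div_le_iff₀' (sub_pos.mpr hlam)]
    exact le_max_left _ _
  nlinarith [hψ t, hh t, le_max_right (M / (m - lam)) 1]

theorem stmt8 (T : ℝ) (hT : 0 < T) (r1 r2 a1 a2 b1 b2 : ℝ → ℝ)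
    (hr1 : Continuous r1 ∧ (∀ t, 0 < r1 t) ∧ ∀ t, r1 (t + T) = r1 t)
    (hr2 : Continuous r2 ∧ (∀ t, 0 < r2 t) ∧ ∀ t, r2 (t + T) = r2 t)
    (ha1 : Continuous a1 ∧ (∀ t, 0 < a1 t) ∧ ∀ t, a1 (t + T) = a1 t)
    (ha2 : Continuous a2 ∧ (∀ t, 0 < a2 t) ∧ ∀ t, a2 (t + T) = a2 t)
    (hb1 : Continuous b1 ∧ (∀ t, 0 < b1 t) ∧ ∀ t, b1 (t + T) = b1 t)
    (hb2 : Continuous b2 ∧ (∀ t, 0 < b2 t) ∧ ∀ t, b2 (t + T) = b2 t)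
    (hA2 : (∫ t in (0:ℝ)..T, (a1 t * pfun r1 a1 T t - b1 t * pfun r2 b2 T t)) < 0 ∧
      (∫ t in (0:ℝ)..T, (b2 t * pfun r2 b2 T t - a2 t * pfun r1 a1 T t)) < 0)
    :
    ∃ lam1 : ℝ, 0 < lam1 ∧ ∃ p1 p2 p1' p2' : ℝ → ℝ,
      Continuous p1' ∧ Continuous p2' ∧
      (∀ t, HasDerivAt p1 (p1' t) t) ∧ (∀ t, HasDerivAt p2 (p2' t) t) ∧
      (∀ t, 0 < p1 t) ∧ (∀ t, 0 < p2 t) ∧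
      (∀ t, p1 (t + T) = p1 t) ∧ (∀ t, p2 (t + T) = p2 t) ∧
      (∀ t, (lam1 - a1 t * pfun r1 a1 T t) * p1 t + b1 t * pfun r2 b2 T t * p2 t ≤ p1' t) ∧
      (∀ t, (lam1 + b2 t * pfun r2 b2 T t - a2 t * pfun r1 a1 T t) * p2 t ≤ p2' t) := by
  have hp : IsPosPeriodic (pfun r1 a1 T) T := IsPosPeriodic.pfun hT hr1 ha1
  obtain ⟨hq_cont, -, hq_per⟩ := IsPosPeriodic.pfun hT hr2 hb2
  set p := pfun r1 a1 T
  set q := pfun r2 b2 T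
  set μ := (∫ t in (0:ℝ)..T, a2 t * p t - b2 t * q t) / T
  have hμ : 0 < μ := by
    refine div_pos ?_ hT
    rw [← neg_neg (∫ t in (0:ℝ)..T, _), ← intervalIntegral.integral_neg]
    simpa only [neg_sub, neg_pos] using hA2.2
  obtain ⟨p2, p2', hp2', hp2, hp2_pos, hp2_per, hp2'_eq⟩ :=
    exists_pos_periodic_solution_mean_sub (φ := fun t => a2 t * p t - b2 t * q t) hT
      ((ha2.1.mul hp.1).sub (hb2.1.mul hq_cont))
      ((Periodic.mul ha2.2.2 hp.2.2).sub (Periodic.mul hb2.2.2 hq_per))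
  obtain ⟨m, hm, hψ⟩ := (IsPosPeriodic.mul ha1 hp).exists_pos_le hT.ne'
  obtain ⟨M, hM⟩ := (((Periodic.mul hb1.2.2 hq_per).mul hp2_per).compact_of_continuous hT.ne'
    ((hb1.1.mul hq_cont).mul (continuous_iff_continuousAt.2 fun t => (hp2 t).continuousAt))).bddAbove
  obtain ⟨C, hC, hC_le⟩ := exists_pos_const_mul_add_nonpos hψ (fun t => hM (mem_range_self t))
    ((min_le_right μ (m / 2)).trans_lt (half_lt_self hm))
  refine ⟨min μ (m / 2), lt_min hμ (half_pos hm), fun _ => C, p2, 0, p2', continuous_const, hp2',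
    fun t => hasDerivAt_const t C, hp2, fun _ => hC, hp2_pos, fun _ => rfl, hp2_per, hC_le,
    fun t => ?_⟩
  rw [hp2'_eq]
  refine mul_le_mul_of_nonneg_right ?_ (hp2_pos t).le
  linarith [min_le_left μ (m / 2)]
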